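/- Let F_r = (X_𝔥, 𝔣) be the principal part with 𝔥 = 𝔥(x,y) and 𝔣 = 𝔣(x,y). For μ ∈ 𝒫^t_k, the Lie bracket satisfies [(μD₀, 0), F_r] = ((∇μ·F_r)·D₀, 0) − (r·μ·X_𝔥, 0) − (0, (r+t₃)·μ·𝔣), where D₀ = (t₁x, t₂y). -/

import Mathlib

open MvPolynomial

def IsQH (t : Fin 3 → ℕ) (k : ℕ) (f : MvPolynomial (Fin 3) ℝ) : Prop :=
  ∀ (ε : ℝ) (x : Fin 3 → ℝ),
    eval (fun i => ε ^ t i * x i) f = ε ^ k * eval x f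

/-- Lie bracket `[P,F] = DP·F − DF·P` of 3D polynomial vector fields. -/
noncomputable def lieBr (P F : Fin 3 → MvPolynomial (Fin 3) ℝ) :
    Fin 3 → MvPolynomial (Fin 3) ℝ :=
  fun j => (∑ i, pderiv i (P j) * F i) - (∑ i, pderiv i (F j) * P i)

/-- `(X_g, 0)`: planar Hamiltonian part with zero third component. -/
noncomputable def hamVF (g : MvPolynomial (Fin 3) ℝ) : Fin 3 → MvPolynomial (Fin 3) ℝ :=
  ![-(pderiv 1 g), pderiv 0 g, 0]

/-- The principal part `F_r = (X_𝔥, 𝔣) = (−∂𝔥/∂y, ∂𝔥/∂x, 𝔣)`. -/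
noncomputable def Fr (𝔥 𝔣 : MvPolynomial (Fin 3) ℝ) : Fin 3 → MvPolynomial (Fin 3) ℝ :=
  ![-(pderiv 1 𝔥), pderiv 0 𝔥, 𝔣]

/-- `(D₀, 0) = (t₁x, t₂y, 0)`. -/
noncomputable def D0VF (t : Fin 3 → ℕ) : Fin 3 → MvPolynomial (Fin 3) ℝ :=
  ![C ((t 0 : ℝ)) * X 0, C ((t 1 : ℝ)) * X 1, 0]

/-!
By the Leibniz rule `[(μD₀, 0), F] = (∇μ·F) D₀ + μ [(D₀, 0), F]`, and
`[(D₀, 0), F] = DD₀·F − DF·D₀` with `DD₀·F = (t₁F₁, t₂F₂, 0)`. Quasi-homogeneity says that every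
monomial of `𝔥` (resp. `𝔣`) has `t`-weight `r + t₁ + t₂` (resp. `r + t₃`): the scaling identity is a
polynomial identity in `ε`, so its coefficients agree. Hence `∂𝔥/∂y`, `∂𝔥/∂x`, `𝔣` are weighted
homogeneous of degrees `r + t₁`, `r + t₂`, `r + t₃`, and since none of them depends on `z`, Euler's
identity reads `∇g·D₀ = (deg g) g`. Subtracting leaves `−r` on the planar part and `−(r + t₃)` on
the vertical one.
-/

namespace MvPolynomial

variable {σ R : Type*}

theorem aeval_C_pow_mul_X_monomial [CommSemiring R] (w : σ → ℕ) (ε : R) (d : σ →₀ ℕ) (c : R) :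
    aeval (fun i => C (ε ^ w i) * X i) (monomial d c) =
      C (ε ^ Finsupp.weight w d) * monomial d c := by
  rw [aeval_monomial, monomial_eq, Finsupp.weight_apply]
  simp only [mul_pow, Finsupp.prod_mul, ← C_pow, ← pow_mul, ← map_finsuppProd, algebraMap_eq]
  rw [Finsupp.sum, Finsupp.prod, ← Finset.prod_pow_eq_pow_sum]
  simp only [smul_eq_mul, mul_comm]
  ring

theorem coeff_aeval_C_pow_mul_X [CommSemiring R] (w : σ → ℕ) (ε : R) (f : MvPolynomial σ R)
    (d : σ →₀ ℕ) :
    coeff d (aeval (fun i => C (ε ^ w i) * X i) f) = ε ^ Finsupp.weight w d * coeff d f := by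
  classical
  induction f using MvPolynomial.induction_on' with
  | monomial e c =>
    rw [aeval_C_pow_mul_X_monomial, coeff_C_mul, coeff_monomial]
    split_ifs with h
    · rw [h]
    · rw [mul_zero, mul_zero]
  | add p q hp hq => rw [map_add, coeff_add, coeff_add, hp, hq, mul_add]

theorem isWeightedHomogeneous_of_eval_pow_mul [CommRing R] [IsDomain R] [Infinite R]
    {w : σ → ℕ} {n : ℕ} {f : MvPolynomial σ R}
    (hf : ∀ (ε : R) (x : σ → R), eval (fun i => ε ^ w i * x i) f = ε ^ n * eval x f) :
    IsWeightedHomogeneous w f n := by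
  intro d hd
  have hscale (ε : R) : aeval (fun i => C (ε ^ w i) * X i) f = C (ε ^ n) * f := by
    refine MvPolynomial.funext fun x => ?_
    rw [← coe_aeval_eq_eval, AlgHom.coe_toRingHom, comp_aeval_apply]
    simpa using hf ε x
  have hcoeff : Polynomial.monomial (Finsupp.weight w d) (coeff d f) =
      Polynomial.monomial n (coeff d f) :=
    Polynomial.funext fun ε => by
      have h := congr_arg (coeff d) (hscale ε)
      rw [coeff_aeval_C_pow_mul_X, coeff_C_mul] at h
      simpa [Polynomial.eval_monomial, mul_comm] using h
  exact (Polynomial.monomial_left_inj hd).mp hcoeff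

theorem pderiv_comm [CommRing R] [DecidableEq σ] (i j : σ) (f : MvPolynomial σ R) :
    pderiv i (pderiv j f) = pderiv j (pderiv i f) := by
  have h : ⁅pderiv i, pderiv j⁆ = (0 : Derivation R (MvPolynomial σ R) (MvPolynomial σ R)) :=
    derivation_ext fun k => by
      rw [Derivation.commutator_apply]
      simp [pderiv_X, Pi.single_apply, apply_ite (pderiv _)]
  simpa [Derivation.commutator_apply, sub_eq_zero] using congr($h f)

end MvPolynomial

theorem IsQH.isWeightedHomogeneous {t : Fin 3 → ℕ} {k : ℕ} {f : MvPolynomial (Fin 3) ℝ}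
    (hf : IsQH t k f) : IsWeightedHomogeneous t f k :=
  isWeightedHomogeneous_of_eval_pow_mul hf

theorem sum_pderiv_mul_D0VF {t : Fin 3 → ℕ} {n : ℕ} {g : MvPolynomial (Fin 3) ℝ}
    (hg : IsWeightedHomogeneous t g n) (hz : pderiv 2 g = 0) :
    ∑ i, pderiv i g * D0VF t i = C (n : ℝ) * g := by
  have euler := hg.sum_weight_X_mul_pderiv
  simp only [Fin.sum_univ_three, hz, mul_zero, add_zero, nsmul_eq_mul, ← map_natCast C] at euler
  simp only [Fin.sum_univ_three, D0VF, Matrix.cons_val_zero, Matrix.cons_val_one, Matrix.cons_val,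
    mul_zero, add_zero, ← euler]
  ring

theorem lieBr_mul_left (μ : MvPolynomial (Fin 3) ℝ) (P F : Fin 3 → MvPolynomial (Fin 3) ℝ)
    (j : Fin 3) :
    lieBr (fun i => μ * P i) F j = (∑ i, pderiv i μ * F i) * P j + μ * lieBr P F j := by
  simp only [lieBr, Fin.sum_univ_three, pderiv_mul]
  ring

theorem lieBr_D0VF_Fr {t : Fin 3 → ℕ} {r : ℕ} {𝔥 𝔣 : MvPolynomial (Fin 3) ℝ}
    (h𝔥 : IsWeightedHomogeneous t 𝔥 (r + t 0 + t 1)) (h𝔣 : IsWeightedHomogeneous t 𝔣 (r + t 2))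
    (h𝔥z : pderiv 2 𝔥 = 0) (h𝔣z : pderiv 2 𝔣 = 0) (j : Fin 3) :
    lieBr (D0VF t) (Fr 𝔥 𝔣) j =
      -(C (r : ℝ) * hamVF 𝔥 j) - ![0, 0, C ((r + t 2 : ℕ) : ℝ) * 𝔣] j := by
  have h𝔥x : ∑ i, pderiv i (pderiv 0 𝔥) * D0VF t i = C ((r + t 1 : ℕ) : ℝ) * pderiv 0 𝔥 :=
    sum_pderiv_mul_D0VF (h𝔥.pderiv (by ring)) (by rw [pderiv_comm, h𝔥z, map_zero])
  have h𝔥y : ∑ i, pderiv i (pderiv 1 𝔥) * D0VF t i = C ((r + t 0 : ℕ) : ℝ) * pderiv 1 𝔥 :=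
    sum_pderiv_mul_D0VF (h𝔥.pderiv (by ring)) (by rw [pderiv_comm, h𝔥z, map_zero])
  have h𝔣D := sum_pderiv_mul_D0VF h𝔣 h𝔣z
  fin_cases j <;>
    simp only [lieBr, Fr, hamVF, Fin.isValue, Fin.zero_eta, Fin.mk_one, Fin.reduceFinMk,
      Matrix.cons_val_zero, Matrix.cons_val_one, Matrix.cons_val, map_neg, neg_mul,
      Finset.sum_neg_distrib, h𝔥x, h𝔥y, h𝔣D] <;>
    simp only [D0VF, Fin.sum_univ_three, Matrix.cons_val_zero, Matrix.cons_val_one, Matrix.cons_val,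
      pderiv_C_mul, pderiv_X_self, pderiv_X_of_ne, ne_eq, Fin.reduceEq, not_false_eq_true, map_zero] <;>
    simp only [Nat.cast_add, map_add] <;> ring

theorem lieBracket_dissipative_Fr_general (t : Fin 3 → ℕ) (r : ℕ)
    (𝔥 𝔣 : MvPolynomial (Fin 3) ℝ) (h𝔥z : pderiv 2 𝔥 = 0) (h𝔣z : pderiv 2 𝔣 = 0)
    (h𝔥 : IsQH t (r + t 0 + t 1) 𝔥) (h𝔣 : IsQH t (r + t 2) 𝔣)
    (μ : MvPolynomial (Fin 3) ℝ) :
    ∀ j, lieBr (fun i => μ * D0VF t i) (Fr 𝔥 𝔣) j =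
      (∑ i, pderiv i μ * Fr 𝔥 𝔣 i) * D0VF t j
      - C ((r : ℝ)) * (μ * hamVF 𝔥 j)
      - ![0, 0, C (((r + t 2 : ℕ) : ℝ)) * (μ * 𝔣)] j := by
  intro j
  rw [lieBr_mul_left, lieBr_D0VF_Fr h𝔥.isWeightedHomogeneous h𝔣.isWeightedHomogeneous h𝔥z h𝔣z]
  fin_cases j <;>
    simp only [Fin.zero_eta, Fin.mk_one, Fin.reduceFinMk, Fin.isValue, Matrix.cons_val_zero,
      Matrix.cons_val_one, Matrix.cons_val] <;>
    ring

/-- `[(μD₀,0), F_r] = ((∇μ·F_r)D₀, 0) − (rμX_𝔥, 0) − (0, (r+t₃)μ𝔣)`. -/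
theorem lieBracket_dissipative_Fr (t : Fin 3 → ℕ) (ht : ∀ i, 0 < t i) (r k : ℕ)
    (𝔥 𝔣 : MvPolynomial (Fin 3) ℝ) (h𝔥z : pderiv 2 𝔥 = 0) (h𝔣z : pderiv 2 𝔣 = 0)
    (h𝔥 : IsQH t (r + t 0 + t 1) 𝔥) (h𝔣 : IsQH t (r + t 2) 𝔣)
    (μ : MvPolynomial (Fin 3) ℝ) (hμ : IsQH t k μ) :
    ∀ j, lieBr (fun i => μ * D0VF t i) (Fr 𝔥 𝔣) j =
      (∑ i, pderiv i μ * Fr 𝔥 𝔣 i) * D0VF t j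
      - C ((r : ℝ)) * (μ * hamVF 𝔥 j)
      - ![0, 0, C (((r + t 2 : ℕ) : ℝ)) * (μ * 𝔣)] j :=
  lieBracket_dissipative_Fr_general t r 𝔥 𝔣 h𝔥z h𝔣z h𝔥 h𝔣 μ
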